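/- Let (X, δ) be a metric-like space and let I be an admissible ideal of subsets of ℕ satisfying the condition (AP). If a sequence (x_n) in X is I-convergent to x₀ ∈ X, then (x_n) is I*-convergent to x₀. -/

import Mathlib

open Filter Topology

/-- A metric-like space structure on `X`. -/
structure MetricLike (X : Type*) where
  d : X → X → ℝ
  nonneg : ∀ x y, 0 ≤ d x y
  eq_of_eq_zero : ∀ x y, d x y = 0 → x = y
  symm : ∀ x y, d x y = d y x
  triangle : ∀ x y z, d x y ≤ d x z + d z y

/-- `I` is an ideal of subsets of `ℕ`. -/
def IsIdeal (I : Set (Set ℕ)) : Prop :=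
  ∅ ∈ I ∧ (∀ A B : Set ℕ, A ∈ I → B ∈ I → A ∪ B ∈ I) ∧
    (∀ A B : Set ℕ, A ∈ I → B ⊆ A → B ∈ I)

/-- `I` is an admissible ideal of subsets of `ℕ`. -/
def IsAdmissibleIdeal (I : Set (Set ℕ)) : Prop :=
  IsIdeal I ∧ (Set.univ : Set ℕ) ∉ I ∧ ∀ n : ℕ, ({n} : Set ℕ) ∈ I

/-- Usual convergence of a sequence in a metric-like space. -/
def MLConv {X : Type*} (δ : MetricLike X) (x : ℕ → X) (x₀ : X) : Prop :=
  ∀ ε : ℝ, 0 < ε → ∃ k₀ : ℕ, ∀ n ≥ k₀, |δ.d (x n) x₀ - δ.d x₀ x₀| < ε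

/-- `I`-convergence of a sequence in a metric-like space. -/
def MLIConv (I : Set (Set ℕ)) {X : Type*} (δ : MetricLike X) (x : ℕ → X) (x₀ : X) : Prop :=
  ∀ ε : ℝ, 0 < ε → {n : ℕ | ε ≤ |δ.d (x n) x₀ - δ.d x₀ x₀|} ∈ I

/-- `I*`-convergence of a sequence in a metric-like space: there is a set
`M = {n₁ < n₂ < …}` in the filter `F(I)` (i.e. with complement in `I`) such that
`δ(x_{n_k}, x₀) → δ(x₀, x₀)`. -/
def MLIStarConv (I : Set (Set ℕ)) {X : Type*} (δ : MetricLike X) (x : ℕ → X) (x₀ : X) : Prop :=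
  ∃ M : Set ℕ, Mᶜ ∈ I ∧ ∃ nk : ℕ → ℕ, StrictMono nk ∧ Set.range nk = M ∧
    Tendsto (fun k => δ.d (x (nk k)) x₀) atTop (𝓝 (δ.d x₀ x₀))

/-- The open `δ`-ball with centre `c` and radius `ε`. -/
def MLBall {X : Type*} (δ : MetricLike X) (c : X) (ε : ℝ) : Set X :=
  {x : X | |δ.d x c - δ.d c c| < ε}

/-- The `T₀` separation axiom for a metric-like space. -/
def MLT0 {X : Type*} (δ : MetricLike X) : Prop :=
  ∀ x y : X, x ≠ y → ∃ (c : X) (ε : ℝ), 0 < ε ∧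
    ((x ∈ MLBall δ c ε ∧ y ∉ MLBall δ c ε) ∨ (y ∈ MLBall δ c ε ∧ x ∉ MLBall δ c ε))

/-- `x₀` is a limit point of the metric-like space `X`. -/
def MLLimitPoint {X : Type*} (δ : MetricLike X) (x₀ : X) : Prop :=
  ∀ r : ℝ, 0 < r → (MLBall δ x₀ r ∩ {x₀}ᶜ).Nonempty

/-- `x₀` is an isolated point of the metric-like space `X`. -/
def MLIsolated {X : Type*} (δ : MetricLike X) (x₀ : X) : Prop :=
  ∃ r : ℝ, 0 < r ∧ MLBall δ x₀ r = {x₀}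

/-- The condition (AP) for an ideal of subsets of `ℕ`. -/
def HasAP (I : Set (Set ℕ)) : Prop :=
  ∀ A : ℕ → Set ℕ, (∀ j, A j ∈ I) → (∀ i j, i ≠ j → Disjoint (A i) (A j)) →
    ∃ B : ℕ → Set ℕ, (∀ j, (symmDiff (A j) (B j)).Finite) ∧ (⋃ j, B j) ∈ I

/-! Split the real sequence `δ(xₙ, x₀)` by the thresholds `1/(j+1)`: the index sets
`Cⱼ = {n | 1/(j+1) ≤ |δ(xₙ, x₀) - δ(x₀, x₀)|}` lie in `I`, and (AP), applied to their disjointed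
pieces, yields one `B ∈ I` that almost contains every `Cⱼ`. Along `M = ℕ \ B` the sequence
converges in the ordinary sense, and `M` is infinite because `I` is admissible. -/

namespace IsAdmissibleIdeal

variable {I : Set (Set ℕ)}

theorem mem_of_finite (hI : IsAdmissibleIdeal I) {s : Set ℕ} (hs : s.Finite) : s ∈ I := by
  induction s, hs using Set.Finite.induction_on with
  | empty => exact hI.1.1
  | @insert n s _ _ ih =>
    rw [Set.insert_eq]
    exact hI.1.2.1 _ _ (hI.2.2 n) ih

theorem infinite_of_compl_mem (hI : IsAdmissibleIdeal I) {M : Set ℕ} (hM : Mᶜ ∈ I) :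
    M.Infinite := fun hfin =>
  hI.2.1 (by simpa using hI.1.2.1 _ _ (hI.mem_of_finite hfin) hM)

end IsAdmissibleIdeal

theorem HasAP.exists_mem_forall_diff_finite {I : Set (Set ℕ)} (hAP : HasAP I)
    (hsub : ∀ A B : Set ℕ, A ∈ I → B ⊆ A → B ∈ I) {C : ℕ → Set ℕ} (hC : ∀ j, C j ∈ I) :
    ∃ B ∈ I, ∀ j, (C j \ B).Finite := by
  obtain ⟨B, hBfin, hBI⟩ := hAP (disjointed C)
    (fun j => hsub _ _ (hC j) (disjointed_le C j)) fun _ _ hij => disjoint_disjointed C hij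
  refine ⟨⋃ i, B i, hBI, fun j => ?_⟩
  refine ((Finset.Iic j).finite_toSet.biUnion fun i _ => hBfin i).subset ?_
  rintro n ⟨hnC, hnB⟩
  have hn : n ∈ ⋃ i ∈ Finset.Iic j, disjointed C i := by
    rw [biUnion_Iic_disjointed]
    exact le_partialSups C j hnC
  obtain ⟨i, hi, hnCi⟩ := Set.mem_iUnion₂.1 hn
  exact Set.mem_iUnion₂.2 ⟨i, hi, Or.inl ⟨hnCi, fun h => hnB (Set.mem_iUnion.2 ⟨i, h⟩)⟩⟩

theorem HasAP.exists_compl_mem_tendsto {Y : Type*} [PseudoMetricSpace Y] {I : Set (Set ℕ)}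
    (hAP : HasAP I) (hsub : ∀ A B : Set ℕ, A ∈ I → B ⊆ A → B ∈ I) {f : ℕ → Y} {a : Y}
    (hf : ∀ ε > 0, {n | ε ≤ dist (f n) a} ∈ I) :
    ∃ M : Set ℕ, Mᶜ ∈ I ∧ Tendsto f (cofinite ⊓ 𝓟 M) (𝓝 a) := by
  obtain ⟨B, hBI, hB⟩ := hAP.exists_mem_forall_diff_finite hsub
    (C := fun j : ℕ => {n | 1 / ((j : ℝ) + 1) ≤ dist (f n) a}) fun j => hf _ Nat.one_div_pos_of_nat
  refine ⟨Bᶜ, by rwa [compl_compl], Metric.tendsto_nhds.2 fun ε hε => ?_⟩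
  obtain ⟨j, hj⟩ := exists_nat_one_div_lt hε
  filter_upwards [mem_inf_of_left (hB j).compl_mem_cofinite,
    mem_inf_of_right (mem_principal_self Bᶜ)] with n hnC hnB
  have : dist (f n) a < 1 / ((j : ℝ) + 1) := not_le.1 fun h => hnC ⟨h, hnB⟩
  exact this.trans hj

theorem Nat.tendsto_orderEmbeddingOfSet (M : Set ℕ) [Infinite M] [DecidablePred (· ∈ M)] :
    Tendsto (Nat.orderEmbeddingOfSet M) atTop (cofinite ⊓ 𝓟 M) := by
  refine tendsto_inf.2 ⟨?_, tendsto_principal.2 (Eventually.of_forall fun k => ?_)⟩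
  · rw [← Nat.cofinite_eq_atTop]
    exact (Nat.orderEmbeddingOfSet M).injective.tendsto_cofinite
  · exact (Nat.orderEmbeddingOfSet_range M).subset (Set.mem_range_self k)

theorem ideal_convergent_imp_ideal_star_convergent_of_AP {X : Type*}
    (δ : MetricLike X) (I : Set (Set ℕ)) (hI : IsAdmissibleIdeal I)
    (hAP : HasAP I) (x : ℕ → X) (x₀ : X)
    (h : MLIConv I δ x x₀) : MLIStarConv I δ x x₀ := by
  classical
  obtain ⟨M, hM, hlim⟩ := hAP.exists_compl_mem_tendsto hI.1.2.2
    (f := fun n => δ.d (x n) x₀) (a := δ.d x₀ x₀)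
    fun ε hε => by simpa only [Real.dist_eq] using h ε hε
  have : Infinite M := (hI.infinite_of_compl_mem hM).to_subtype
  exact ⟨M, hM, Nat.orderEmbeddingOfSet M, (Nat.orderEmbeddingOfSet M).strictMono,
    Nat.orderEmbeddingOfSet_range M, hlim.comp (Nat.tendsto_orderEmbeddingOfSet M)⟩
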